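/- Let t ∈ C be n-ary and unspoilt, witnessed by unary t_1, …, t_n ∈ C with t(t_1, …, t_n) ∈ Φ. If t depends on its i-th variable (1 ≤ i ≤ n), then t_i ∈ Φ ∪ {id}. -/

import Mathlib

universe u v

/-- A clone on `X`: a set of finitary operations (of each arity `n + 1 ≥ 1`)
containing all projections and closed under composition. -/
structure Clone (X : Type u) where
  carrier : ∀ n : ℕ, Set ((Fin (n + 1) → X) → X)
  proj_mem : ∀ (n : ℕ) (i : Fin (n + 1)), (fun x => x i) ∈ carrier n
  comp_mem : ∀ {m n : ℕ} (f : (Fin (m + 1) → X) → X)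
      (g : Fin (m + 1) → (Fin (n + 1) → X) → X),
      f ∈ carrier m → (∀ i, g i ∈ carrier n) →
      (fun x => f fun i => g i x) ∈ carrier n

namespace Clone

variable {X : Type u}

theorem carrier_injective : Function.Injective (Clone.carrier (X := X)) := by
  rintro ⟨c, _, _⟩ ⟨d, _, _⟩ h
  simpa using h

instance : PartialOrder (Clone X) where
  le C D := ∀ n, C.carrier n ⊆ D.carrier n
  le_refl _ _ := subset_rfl
  le_trans _ _ _ h₁ h₂ n := (h₁ n).trans (h₂ n)
  le_antisymm _ _ h₁ h₂ :=
    carrier_injective (funext fun n => subset_antisymm (h₁ n) (h₂ n))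

instance : InfSet (Clone X) where
  sInf S :=
    { carrier := fun n => ⋂ C ∈ S, C.carrier n
      proj_mem := fun n i => Set.mem_iInter₂.2 fun C _ => C.proj_mem n i
      comp_mem := fun f g hf hg => Set.mem_iInter₂.2 fun C hC =>
        C.comp_mem f g (Set.mem_iInter₂.1 hf C hC)
          fun i => Set.mem_iInter₂.1 (hg i) C hC }

/-- The lattice `Cl(X)` of all clones on `X` is a complete lattice
(with infima given by intersection). -/
instance : CompleteLattice (Clone X) :=
  completeLatticeOfInf (Clone X) (fun S =>
    ⟨fun C hC n _ hx => Set.mem_iInter₂.1 hx C hC,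
     fun _ hD n _ hx => Set.mem_iInter₂.2 fun C hC => hD hC n hx⟩)

/-- The clone generated by a family `F` of operations:
the smallest clone whose carrier contains `F`. -/
def cloneGen (F : ∀ n : ℕ, Set ((Fin (n + 1) → X) → X)) : Clone X :=
  sInf {C : Clone X | ∀ n, F n ⊆ C.carrier n}

end Clone

attribute [local instance] Classical.propDecidable

noncomputable section Construction

variable {X : Type u} {P : Type v} [SemilatticeSup P]
variable (e0 e1 e2 e4 : X) (Af : P → Set X)

/-- `A = X ∖ {0, 1, 2, 4}`. -/
def Aset : Set X := ({e0, e1, e2, e4} : Set X)ᶜ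

/-- The unary function `φ_p`: the characteristic function of `A_p` on `A`,
fixing `2` and sending `{0, 1, 4}` to `4`. -/
def phi (p : P) (x : X) : X :=
  if x ∈ Af p then e1
  else if x ∈ Aset e0 e1 e2 e4 then e0
  else if x = e2 then e2
  else e4

/-- The ternary function `m_p^{q₁,q₂}`. -/
def mOp (p q1 q2 : P) (x y z : X) : X :=
  if y = phi e0 e1 e2 e4 Af q1 x ∧ z = phi e0 e1 e2 e4 Af q2 x then
    phi e0 e1 e2 e4 Af p x
  else if (x = e2 ∨ y = e2 ∨ z = e2) ∧ y ≠ e1 ∧ y ≠ e4 ∧ z ≠ e1 ∧ z ≠ e4 then e2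
  else e4

/-- `φ_p` as a unary operation (member of arity-1 part of a clone). -/
def phi1 (p : P) : (Fin 1 → X) → X := fun x => phi e0 e1 e2 e4 Af p (x 0)

/-- `m_p^{q₁,q₂}` as a ternary operation. -/
def m3 (p q1 q2 : P) : (Fin 3 → X) → X :=
  fun x => mOp e0 e1 e2 e4 Af p q1 q2 (x 0) (x 1) (x 2)

/-- The family `Φ_Q = {φ_p : p ∈ Q}`, as a family of operations indexed by arity. -/
def PhiFam (Q : Set P) : ∀ n : ℕ, Set ((Fin (n + 1) → X) → X)
  | 0 => {f | ∃ p ∈ Q, f = phi1 e0 e1 e2 e4 Af p}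
  | _ + 1 => ∅

/-- The family `M = {m_p^{q₁,q₂} : p ≤ q₁ ∨ q₂}`, as a family of operations indexed by arity. -/
def MFam : ∀ n : ℕ, Set ((Fin (n + 1) → X) → X)
  | 2 => {f | ∃ p q1 q2 : P, p ≤ q1 ⊔ q2 ∧ f = m3 e0 e1 e2 e4 Af p q1 q2}
  | _ => ∅

/-- The clone `C = ⟨Φ ∪ M⟩`. -/
def CClone : Clone X :=
  Clone.cloneGen fun n => PhiFam e0 e1 e2 e4 Af Set.univ n ∪ MFam e0 e1 e2 e4 Af n

/-- A function depends on its `i`-th variable iff it takes different values on two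
tuples differing only in the `i`-th coordinate. -/
def DependsOnVar {n : ℕ} (t : (Fin n → X) → X) (i : Fin n) : Prop :=
  ∃ a b : Fin n → X, (∀ j, j ≠ i → a j = b j) ∧ t a ≠ t b

/-- A unary function is distracted iff it takes a value in `{2, 4}` somewhere on `A`. -/
def Distracted (f : X → X) : Prop :=
  ∃ a ∈ Aset e0 e1 e2 e4, f a = e2 ∨ f a = e4

/-- The unary function `X → X` corresponding to a unary operation. -/
def toFun1 (u : (Fin 1 → X) → X) : X → X := fun a => u fun _ => a

/-- An `n`-ary member of `C` is unspoilt iff some substitution of unary members of `C`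
into it yields an element of `Φ`. -/
def Unspoilt {n : ℕ} (t : (Fin (n + 1) → X) → X) : Prop :=
  ∃ ts : Fin (n + 1) → (Fin 1 → X) → X,
    (∀ i, ts i ∈ (CClone e0 e1 e2 e4 Af).carrier 0) ∧
    (fun x : Fin 1 → X => t fun i => ts i x) ∈ PhiFam e0 e1 e2 e4 Af Set.univ 0

/-- The family `S` of all spoilt members of `C`. -/
def SpoiltFam (n : ℕ) : Set ((Fin (n + 1) → X) → X) :=
  {t | t ∈ (CClone e0 e1 e2 e4 Af).carrier n ∧ ¬ Unspoilt e0 e1 e2 e4 Af t}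

/-- The clone `C_I = ⟨Φ_I ∪ M ∪ S⟩`. -/
def CI (I : Set P) : Clone X :=
  Clone.cloneGen fun n =>
    PhiFam e0 e1 e2 e4 Af I n ∪ MFam e0 e1 e2 e4 Af n ∪ SpoiltFam e0 e1 e2 e4 Af n

end Construction

/-- An ideal of a join-semilattice: a downward closed subset closed under finite joins. -/
def IsIdealP {P : Type v} [SemilatticeSup P] (I : Set P) : Prop :=
  (∀ p q : P, p ≤ q → q ∈ I → p ∈ I) ∧ ∀ p q : P, p ∈ I → q ∈ I → p ⊔ q ∈ I

/-- The ideal of `P` generated by a subset `I`. -/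
def idealGen {P : Type v} [SemilatticeSup P] (I : Set P) : Set P :=
  ⋂₀ {J : Set P | IsIdealP J ∧ I ⊆ J}

/-!
Every unary member of `C` is the identity, some `φ_p`, or *distracted* (it takes a value in
`{2, 4}` somewhere on `A`), because substituting such functions into `φ_q` or `m_q^{q₁,q₂}`
gives such a function again: when the result is not distracted, the first argument must map `A`
into `A` and the other two must agree with `φ_{q₁}`, `φ_{q₂}` on `A`, which forces them to be
`id`, `φ_{q₁}`, `φ_{q₂}`. Independently, `{2, 4}` is absorbing: the generators land in `{2, 4}`
as soon as one argument does, and this persists under composition for every essential argument.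
Since `t(t₁, …, tₙ) = φ_p` maps `A` into `{0, 1}`, a distracted `tᵢ` in an essential position
is impossible.
-/

open Function

lemma exists_dependsOnVar_of_ne {X : Type u} {m : ℕ} (f : (Fin m → X) → X) {c d : Fin m → X}
    (hne : f c ≠ f d) : ∃ l, c l ≠ d l ∧ DependsOnVar f l := by
  -- move from `c` to `d` one coordinate at a time; some single change alters the value of `f`
  suffices H : ∀ S : Finset (Fin m), ∀ c, (∀ l ∉ S, c l = d l) → f c ≠ f d →
      ∃ l, c l ≠ d l ∧ DependsOnVar f l from H Finset.univ c (by simp) hne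
  intro S
  induction S using Finset.induction_on with
  | empty =>
    intro c hc hne
    exact absurd (congrArg f (funext fun l => hc l (Finset.notMem_empty l))) hne
  | insert k S _ ih =>
    intro c hc hne
    by_cases hstep : f c = f (update c k (d k))
    · have hagree : ∀ l ∉ S, update c k (d k) l = d l := by
        intro l hl
        by_cases hlk : l = k
        · subst hlk; exact update_self ..
        · rw [update_of_ne hlk]; exact hc l (by simp [hlk, hl])
      obtain ⟨l, hl, hdep⟩ := ih _ hagree (hstep ▸ hne)
      have hlk : l ≠ k := by rintro rfl; exact hl (update_self ..)
      exact ⟨l, by rwa [update_of_ne hlk] at hl, hdep⟩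
    · exact ⟨k, fun hck => hstep (by rw [← hck, update_eq_self]), c, update c k (d k),
        fun j hj => (update_of_ne hj ..).symm, hstep⟩

lemma eq_of_dependsOnVar_proj {X : Type u} {n : ℕ} {i j : Fin n}
    (h : DependsOnVar (fun x : Fin n → X => x i) j) : j = i := by
  by_contra hji
  obtain ⟨a, b, hab, hne⟩ := h
  exact hne (hab i (Ne.symm hji))

lemma toFun1_injective {X : Type u} : Injective (toFun1 : ((Fin 1 → X) → X) → X → X) := by
  intro v w h
  funext x
  have hx : x = fun _ => x 0 := funext fun j => congrArg x (Subsingleton.elim j 0)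
  rw [hx]
  exact congrFun h (x 0)

namespace Clone

variable {X : Type u}

theorem cloneGen_le {F : ∀ n : ℕ, Set ((Fin (n + 1) → X) → X)} {C : Clone X}
    (h : ∀ n, F n ⊆ C.carrier n) : cloneGen F ≤ C :=
  sInf_le h

def preserving (U : Set (X → X)) : Clone X where
  carrier n := {s | ∀ u : Fin (n + 1) → X → X, (∀ j, u j ∈ U) → (fun a => s fun j => u j a) ∈ U}
  proj_mem _ i _ hu := hu i
  comp_mem _ g hf hg u hu := hf (fun l a => g l fun j => u j a) fun l => hg l u hu

def absorbing (B : Set X) : Clone X where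
  carrier n := {s | ∀ j, DependsOnVar s j → ∀ x, x j ∈ B → s x ∈ B}
  proj_mem _ _ j hj _ hx := eq_of_dependsOnVar_proj hj ▸ hx
  comp_mem f g hf hg j hj x hx := by
    obtain ⟨a, b, hab, hne⟩ := hj
    obtain ⟨l, hl, hfl⟩ := exists_dependsOnVar_of_ne f hne
    exact hf l hfl _ (hg l j ⟨a, b, hab, hl⟩ x hx)

end Clone

section Construction

variable {X : Type u} {P : Type v} {e0 e1 e2 e4 : X} {Af : P → Set X}

lemma CClone_le [SemilatticeSup P] {C : Clone X}
    (hphi : ∀ p, phi1 e0 e1 e2 e4 Af p ∈ C.carrier 0)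
    (hm : ∀ p q1 q2 : P, p ≤ q1 ⊔ q2 → m3 e0 e1 e2 e4 Af p q1 q2 ∈ C.carrier 2) :
    CClone e0 e1 e2 e4 Af ≤ C := by
  refine Clone.cloneGen_le fun n f hf => ?_
  rcases hf with hf | hf
  · match n, f, hf with
    | 0, _, ⟨p, _, rfl⟩ => exact hphi p
  · match n, f, hf with
    | 2, _, ⟨p, q1, q2, hle, rfl⟩ => exact hm p q1 q2 hle

lemma notMem_Aset_of_mem_pair {x : X} (hx : x ∈ ({e2, e4} : Set X)) :
    x ∉ Aset e0 e1 e2 e4 := by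
  simp only [Aset, Set.mem_compl_iff, Set.mem_insert_iff, Set.mem_singleton_iff, not_not] at hx ⊢
  tauto

lemma phi_notMem_Aset (p : P) (x : X) : phi e0 e1 e2 e4 Af p x ∉ Aset e0 e1 e2 e4 := by
  unfold phi
  split_ifs <;> simp [Aset]

lemma phi_of_notMem_Aset (hAf : ∀ p : P, Af p ⊆ Aset e0 e1 e2 e4) (p : P) {x : X}
    (hx : x ∉ Aset e0 e1 e2 e4) : phi e0 e1 e2 e4 Af p x = if x = e2 then e2 else e4 := by
  rw [phi, if_neg fun h => hx (hAf p h), if_neg hx]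

lemma phi_mem_pair_iff (hdist : e0 ≠ e1 ∧ e0 ≠ e2 ∧ e0 ≠ e4 ∧ e1 ≠ e2 ∧ e1 ≠ e4 ∧ e2 ≠ e4)
    (hAf : ∀ p : P, Af p ⊆ Aset e0 e1 e2 e4) (p : P) (x : X) :
    phi e0 e1 e2 e4 Af p x ∈ ({e2, e4} : Set X) ↔ x ∉ Aset e0 e1 e2 e4 := by
  constructor
  · intro h hx
    unfold phi at h
    simp only [Set.mem_insert_iff, Set.mem_singleton_iff] at h
    split_ifs at h <;> tauto
  · intro hx
    rw [phi_of_notMem_Aset hAf p hx]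
    split_ifs <;> simp

lemma mOp_of_eq (p : P) {q1 q2 : P} {x y z : X} (hy : y = phi e0 e1 e2 e4 Af q1 x)
    (hz : z = phi e0 e1 e2 e4 Af q2 x) :
    mOp e0 e1 e2 e4 Af p q1 q2 x y z = phi e0 e1 e2 e4 Af p x :=
  if_pos ⟨hy, hz⟩

lemma mem_Aset_of_mOp_notMem_pair
    (hdist : e0 ≠ e1 ∧ e0 ≠ e2 ∧ e0 ≠ e4 ∧ e1 ≠ e2 ∧ e1 ≠ e4 ∧ e2 ≠ e4)
    (hAf : ∀ p : P, Af p ⊆ Aset e0 e1 e2 e4) {p q1 q2 : P} {x y z : X}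
    (h : mOp e0 e1 e2 e4 Af p q1 q2 x y z ∉ ({e2, e4} : Set X)) :
    x ∈ Aset e0 e1 e2 e4 ∧ y = phi e0 e1 e2 e4 Af q1 x ∧ z = phi e0 e1 e2 e4 Af q2 x := by
  unfold mOp at h
  split_ifs at h with hc
  · exact ⟨not_not.1 fun hx => h ((phi_mem_pair_iff hdist hAf p x).2 hx), hc⟩
  all_goals simp at h

lemma CClone_le_absorbing [SemilatticeSup P]
    (hdist : e0 ≠ e1 ∧ e0 ≠ e2 ∧ e0 ≠ e4 ∧ e1 ≠ e2 ∧ e1 ≠ e4 ∧ e2 ≠ e4)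
    (hAf : ∀ p : P, Af p ⊆ Aset e0 e1 e2 e4) :
    CClone e0 e1 e2 e4 Af ≤ Clone.absorbing {e2, e4} := by
  refine CClone_le (fun p j _ x hx => ?_) (fun p q1 q2 _ j _ x hx => ?_)
  · obtain rfl : j = 0 := Subsingleton.elim (α := Fin 1) _ _
    exact (phi_mem_pair_iff hdist hAf p _).2 (notMem_Aset_of_mem_pair hx)
  · by_contra h
    obtain ⟨hA, h1, h2⟩ := mem_Aset_of_mOp_notMem_pair hdist hAf h
    have hphi : ∀ q, phi e0 e1 e2 e4 Af q (x 0) ∉ ({e2, e4} : Set X) :=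
      fun q hq => (phi_mem_pair_iff hdist hAf q _).1 hq hA
    fin_cases j
    · exact notMem_Aset_of_mem_pair hx hA
    · exact hphi q1 (h1 ▸ hx)
    · exact hphi q2 (h2 ▸ hx)

variable (e0 e1 e2 e4 Af) in
def idPhiDistracted : Set (X → X) :=
  {f | f = id ∨ (∃ p, f = phi e0 e1 e2 e4 Af p) ∨ Distracted e0 e1 e2 e4 f}

lemma eq_id_of_mapsTo {f : X → X} (hA : (Aset e0 e1 e2 e4).Nonempty)
    (hf : f ∈ idPhiDistracted e0 e1 e2 e4 Af)
    (hmaps : Set.MapsTo f (Aset e0 e1 e2 e4) (Aset e0 e1 e2 e4)) : f = id := by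
  rcases hf with hf | ⟨q, rfl⟩ | ⟨a, ha, hfa⟩
  · exact hf
  · obtain ⟨a, ha⟩ := hA
    exact absurd (hmaps ha) (phi_notMem_Aset q a)
  · exact absurd (hmaps ha) (notMem_Aset_of_mem_pair hfa)

lemma eq_phi_of_eqOn (hdist : e0 ≠ e1 ∧ e0 ≠ e2 ∧ e0 ≠ e4 ∧ e1 ≠ e2 ∧ e1 ≠ e4 ∧ e2 ≠ e4)
    (hAf : ∀ p : P, Af p ⊆ Aset e0 e1 e2 e4) (hA : (Aset e0 e1 e2 e4).Nonempty) {f : X → X}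
    {q : P} (hf : f ∈ idPhiDistracted e0 e1 e2 e4 Af)
    (heq : Set.EqOn f (phi e0 e1 e2 e4 Af q) (Aset e0 e1 e2 e4)) : f = phi e0 e1 e2 e4 Af q := by
  rcases hf with rfl | ⟨r, rfl⟩ | ⟨a, ha, hfa⟩
  · obtain ⟨a, ha⟩ := hA
    exact (phi_notMem_Aset q a (by rw [← heq ha]; exact ha)).elim
  · funext x
    by_cases hx : x ∈ Aset e0 e1 e2 e4
    · exact heq hx
    · rw [phi_of_notMem_Aset hAf r hx, phi_of_notMem_Aset hAf q hx]
  · exact absurd ha ((phi_mem_pair_iff hdist hAf q a).1 (heq ha ▸ hfa))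

lemma CClone_le_preserving_idPhiDistracted [SemilatticeSup P]
    (hdist : e0 ≠ e1 ∧ e0 ≠ e2 ∧ e0 ≠ e4 ∧ e1 ≠ e2 ∧ e1 ≠ e4 ∧ e2 ≠ e4)
    (hAf : ∀ p : P, Af p ⊆ Aset e0 e1 e2 e4) (hA : (Aset e0 e1 e2 e4).Nonempty) :
    CClone e0 e1 e2 e4 Af ≤ Clone.preserving (idPhiDistracted e0 e1 e2 e4 Af) := by
  refine CClone_le (fun p u hu => ?_) (fun p q1 q2 _ u hu => ?_)
  · by_cases hw : Distracted e0 e1 e2 e4 fun a => phi e0 e1 e2 e4 Af p (u 0 a)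
    · exact Or.inr (Or.inr hw)
    have h0 : u 0 = id := eq_id_of_mapsTo hA (hu 0) fun a ha => not_not.1 fun hua =>
      hw ⟨a, ha, (phi_mem_pair_iff hdist hAf p _).2 hua⟩
    exact Or.inr (Or.inl ⟨p, funext fun a => by simp [phi1, h0]⟩)
  · by_cases hw : Distracted e0 e1 e2 e4 fun a => mOp e0 e1 e2 e4 Af p q1 q2 (u 0 a) (u 1 a) (u 2 a)
    · exact Or.inr (Or.inr hw)
    have hgood : ∀ a ∈ Aset e0 e1 e2 e4, u 0 a ∈ Aset e0 e1 e2 e4 ∧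
        u 1 a = phi e0 e1 e2 e4 Af q1 (u 0 a) ∧ u 2 a = phi e0 e1 e2 e4 Af q2 (u 0 a) :=
      fun a ha => mem_Aset_of_mOp_notMem_pair hdist hAf fun hwa => hw ⟨a, ha, hwa⟩
    have h0 : u 0 = id := eq_id_of_mapsTo hA (hu 0) fun a ha => (hgood a ha).1
    have h1 : u 1 = phi e0 e1 e2 e4 Af q1 :=
      eq_phi_of_eqOn hdist hAf hA (hu 1) fun a ha => by simpa [h0] using (hgood a ha).2.1
    have h2 : u 2 = phi e0 e1 e2 e4 Af q2 :=
      eq_phi_of_eqOn hdist hAf hA (hu 2) fun a ha => by simpa [h0] using (hgood a ha).2.2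
    refine Or.inr (Or.inl ⟨p, funext fun a => ?_⟩)
    simp only [m3, h0, h1, h2, id]
    exact mOp_of_eq p rfl rfl

end Construction

theorem unspoilt_witness_in_Phi_or_id_general
    {X : Type u} {P : Type v} [Infinite X] [SemilatticeSup P]
    (e0 e1 e2 e4 : X)
    (hdist : e0 ≠ e1 ∧ e0 ≠ e2 ∧ e0 ≠ e4 ∧ e1 ≠ e2 ∧ e1 ≠ e4 ∧ e2 ≠ e4)
    (Af : P → Set X) (hAf : ∀ p : P, Af p ⊆ Aset e0 e1 e2 e4)
    (n : ℕ) (t : (Fin (n + 1) → X) → X)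
    (ht : t ∈ (CClone e0 e1 e2 e4 Af).carrier n)
    (ts : Fin (n + 1) → (Fin 1 → X) → X)
    (hts : ∀ i, ts i ∈ (CClone e0 e1 e2 e4 Af).carrier 0)
    (hcomp : (fun x : Fin 1 → X => t fun i => ts i x) ∈ PhiFam e0 e1 e2 e4 Af Set.univ 0)
    (i : Fin (n + 1)) (hdep : DependsOnVar t i) :
    ts i = (fun x => x 0) ∨ ∃ p : P, ts i = phi1 e0 e1 e2 e4 Af p := by
  have hA : (Aset e0 e1 e2 e4).Nonempty := (Set.toFinite _).infinite_compl.nonempty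
  obtain ⟨p, -, hp⟩ := hcomp
  have hshape : toFun1 (ts i) ∈ idPhiDistracted e0 e1 e2 e4 Af :=
    CClone_le_preserving_idPhiDistracted hdist hAf hA 0 (hts i) (fun _ => id) fun _ => Or.inl rfl
  have hnot : ¬ Distracted e0 e1 e2 e4 (toFun1 (ts i)) := by
    rintro ⟨a, ha, hdis⟩
    have habs := CClone_le_absorbing hdist hAf n ht i hdep (fun j => ts j fun _ => a) hdis
    rw [show t (fun j => ts j fun _ => a) = phi e0 e1 e2 e4 Af p a from congrFun hp _] at habs
    exact (phi_mem_pair_iff hdist hAf p a).1 habs ha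
  rcases hshape with h | ⟨q, h⟩ | h
  · exact Or.inl (toFun1_injective (show toFun1 (ts i) = toFun1 fun x => x 0 from h))
  · exact Or.inr ⟨q, toFun1_injective (show toFun1 (ts i) = toFun1 (phi1 e0 e1 e2 e4 Af q) from h)⟩
  · exact absurd h hnot

/-- Remark: if `t ∈ C` is unspoilt, witnessed by unary members `ts` of `C` with
`t(ts 0, …, ts n) ∈ Φ`, and `t` depends on its `i`-th variable, then `ts i ∈ Φ ∪ {id}`. -/
theorem unspoilt_witness_in_Phi_or_id
    {X : Type u} {P : Type v} [Infinite X] [SemilatticeSup P]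
    (e0 e1 e2 e4 : X)
    (hdist : e0 ≠ e1 ∧ e0 ≠ e2 ∧ e0 ≠ e4 ∧ e1 ≠ e2 ∧ e1 ≠ e4 ∧ e2 ≠ e4)
    (hcard : Cardinal.lift.{u} (Cardinal.mk P) ≤ Cardinal.lift.{v} (2 ^ Cardinal.mk X))
    (Af : P → Set X) (hAf : ∀ p : P, Af p ⊆ Aset e0 e1 e2 e4)
    (hcover : ∀ (p : P) (k : ℕ) (q : Fin k → P),
      (∀ i, p ≠ q i) → ¬ Af p ⊆ ⋃ i, Af (q i))
    (n : ℕ) (t : (Fin (n + 1) → X) → X)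
    (ht : t ∈ (CClone e0 e1 e2 e4 Af).carrier n)
    (ts : Fin (n + 1) → (Fin 1 → X) → X)
    (hts : ∀ i, ts i ∈ (CClone e0 e1 e2 e4 Af).carrier 0)
    (hcomp : (fun x : Fin 1 → X => t fun i => ts i x) ∈ PhiFam e0 e1 e2 e4 Af Set.univ 0)
    (i : Fin (n + 1)) (hdep : DependsOnVar t i) :
    ts i = (fun x => x 0) ∨ ∃ p : P, ts i = phi1 e0 e1 e2 e4 Af p :=
  unspoilt_witness_in_Phi_or_id_general e0 e1 e2 e4 hdist Af hAf n t ht ts hts hcomp i hdep
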